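/- arXiv:1605.07494 — 2 statements merged into one kernel-verified Lean document; each statement's English description precedes it below -/
import Mathlib

section
/- Let c = (x, y, z) : ℝ → ℝ³ be a smooth map with c(t+1) = c(t) + (1, 0, 0) for all t (a lift of a loop in S¹ × ℝ²), satisfying the Legendrian condition z'(t) = y(t)·x'(t) for all t, and with everywhere positive front slope: y(t) > 0 for all t. Define c_s(t) := c(t) − (s, 0, 0) for s ∈ [0,1]. Then: (i) for every s the curve c_s satisfies the Legendrian condition; (ii) the isotopy is positive: the contact form evaluated on the s-derivative equals α_{c_s(t)}(∂_s c_s(t)) = y(t) > 0 for all s, t; and (iii) c_1(t) + (1, 0, 0) = c_0(t) for all t, so c_1 and c_0 project to the same loop in S¹ × ℝ². Hence a Legendrian loop in J¹(S¹) whose front has everywhere positive slope lies in a positive loop of Legendrians. -/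
/- `J¹(S¹)` is modeled as `S¹ × ℝ²` with `S¹ = ℝ/ℤ`, coordinates `(x, y, z)` and contact form
`dz − y dx`; a Legendrian loop is described by a lift `c = (x, y, z) : ℝ → ℝ³` with
`c(t+1) = c(t) + (1, 0, 0)`.  For a point `(x, y, z)` and a vector `(u, v, w)` the contact form
evaluates to `w − y·u`. -/

/-- A Legendrian loop in `J¹(S¹)` whose front has everywhere positive slope lies in a positive
loop of Legendrians: translating it in the negative `x`-direction via
`c_s(t) = c(t) − (s, 0, 0)`, `s ∈ [0, 1]`, gives (i) a Legendrian at each time `s`, which is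
(ii) a positive isotopy (the contact form on the `s`-derivative equals `y(t) > 0`), and
(iii) `c_1 + (1, 0, 0) = c_0`, so `c_1` and `c_0` project to the same loop in `S¹ × ℝ²`. -/
theorem positive_slope_front_lies_in_positive_loop
    (c : ℝ → ℝ × ℝ × ℝ) (hc : ContDiff ℝ (⊤ : ℕ∞) c)
    (hper : ∀ t, c (t + 1) = c t + (1, 0, 0))
    (hleg : ∀ t, deriv (fun τ => (c τ).2.2) t = (c t).2.1 * deriv (fun τ => (c τ).1) t)
    (hslope : ∀ t, 0 < (c t).2.1) :
    (∀ s ∈ Set.Icc (0 : ℝ) 1, ∀ t,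
      deriv (fun τ => (c τ - ((s, 0, 0) : ℝ × ℝ × ℝ)).2.2) t =
        (c t - ((s, 0, 0) : ℝ × ℝ × ℝ)).2.1 *
          deriv (fun τ => (c τ - ((s, 0, 0) : ℝ × ℝ × ℝ)).1) t) ∧
    (∀ s ∈ Set.Icc (0 : ℝ) 1, ∀ t,
      (deriv (fun σ => c t - ((σ, 0, 0) : ℝ × ℝ × ℝ)) s).2.2 -
          (c t - ((s, 0, 0) : ℝ × ℝ × ℝ)).2.1 *
            (deriv (fun σ => c t - ((σ, 0, 0) : ℝ × ℝ × ℝ)) s).1 = (c t).2.1 ∧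
        0 < (c t).2.1) ∧
    (∀ t, (c t - ((1, 0, 0) : ℝ × ℝ × ℝ)) + (1, 0, 0) = c t - ((0, 0, 0) : ℝ × ℝ × ℝ)) := by
  have hderiv : ∀ t s : ℝ, HasDerivAt (fun σ : ℝ => c t - ((σ, 0, 0) : ℝ × ℝ × ℝ))
      (-((1, 0, 0) : ℝ × ℝ × ℝ)) s := by
    intro t s
    have h1 : HasDerivAt (fun σ : ℝ => ((σ, 0, 0) : ℝ × ℝ × ℝ)) ((1, 0, 0) : ℝ × ℝ × ℝ) s := by
      exact (hasDerivAt_id s).prodMk ((hasDerivAt_const s (0:ℝ)).prodMk (hasDerivAt_const s (0:ℝ)))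
    have h2 := (hasDerivAt_const s (c t)).sub h1
    rw [zero_sub] at h2
    exact h2
  refine ⟨?_, ?_, ?_⟩
  · intro s _ t
    have e2 : (fun τ => (c τ - ((s, 0, 0) : ℝ × ℝ × ℝ)).2.2) = fun τ => (c τ).2.2 := by
      funext τ; simp [Prod.sub_def]
    have e1 : (fun τ => (c τ - ((s, 0, 0) : ℝ × ℝ × ℝ)).1) = fun τ => (c τ).1 - s := by
      funext τ; simp [Prod.sub_def]
    rw [e2, e1, deriv_sub_const]
    simpa [Prod.sub_def] using hleg t
  · intro s _ t
    refine ⟨?_, hslope t⟩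
    rw [(hderiv t s).deriv]
    simp [Prod.sub_def]
  · intro t
    ext <;> simp [Prod.sub_def]
end

section
/- Define F : ℝ³ → ℝ³ by F(θ₁, θ₂, s) = (θ₁ − θ₂, θ₂, e^s − 1). Let γ be the 1-form γ_{(θ₁, θ₂, s)}(u₁, u₂, u₃) = u₁ − e^s u₂ (i.e. dθ₁ − e^s dθ₂, the contact product form of (S¹, dθ)) and let β be the 1-form β_{(z, x, y)}(w₁, w₂, w₃) = w₁ − y·w₂ (i.e. dz − y dx on S¹ × T^*S¹ in coordinates (z, x, y)). Then: (i) β_{F(p)}(DF_p(u)) = γ_p(u) for all points p and vectors u, i.e. F^*β = γ; (ii) F is injective with image ℝ × ℝ × (−1, ∞); and (iii) F(θ, θ, 0) = (0, θ, 0) for all θ, so F maps the diagonal {(θ, θ, 0)} onto the zero section {(0, x, 0) : x ∈ ℝ}. (This is the contactomorphism used to prove that (S¹, ξ_std) is strongly orderable.) -/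
/-- The contact product form `dθ₁ − e^s dθ₂` of `(S¹, dθ)`, at the point `(θ₁, θ₂, s)` on the
vector `(u₁, u₂, u₃)`. -/
noncomputable def gammaForm (p u : ℝ × ℝ × ℝ) : ℝ :=
  u.1 - Real.exp p.2.2 * u.2.1

/-- The contact form `dz − y dx` on `S¹ × T^*S¹` in coordinates `(z, x, y)`, at the point
`(z, x, y)` on the vector `(w₁, w₂, w₃)`. -/
def betaForm (q w : ℝ × ℝ × ℝ) : ℝ :=
  w.1 - q.2.2 * w.2.1

/- The map is the product of the shear `(θ₁, θ₂) ↦ (θ₁ − θ₂, θ₂)` with `s ↦ e^s − 1`, and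
`d(θ₁ − θ₂) − (e^s − 1) dθ₂ = dθ₁ − e^s dθ₂`.  It is inverted on `{y > −1}` by
`(z, x, y) ↦ (z + x, x, log (1 + y))`. -/

open Real

noncomputable section

namespace ContactProductCircle

def toJet (p : ℝ × ℝ × ℝ) : ℝ × ℝ × ℝ :=
  (p.1 - p.2.1, p.2.1, exp p.2.2 - 1)

def ofJet (q : ℝ × ℝ × ℝ) : ℝ × ℝ × ℝ :=
  (q.1 + q.2.1, q.2.1, log (q.2.2 + 1))

theorem ofJet_toJet (p : ℝ × ℝ × ℝ) : ofJet (toJet p) = p := by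
  simp [ofJet, toJet]

theorem toJet_ofJet {q : ℝ × ℝ × ℝ} (hq : -1 < q.2.2) : toJet (ofJet q) = q := by
  simp [ofJet, toJet, exp_log (show 0 < q.2.2 + 1 by linarith)]

theorem toJet_injective : Function.Injective toJet :=
  Function.LeftInverse.injective ofJet_toJet

theorem range_toJet : Set.range toJet = {q | -1 < q.2.2} := by
  ext q
  constructor
  · rintro ⟨p, rfl⟩
    simpa [toJet] using exp_pos p.2.2
  · intro hq
    exact ⟨ofJet q, toJet_ofJet hq⟩

theorem toJet_diag (θ : ℝ) : toJet (θ, θ, 0) = (0, θ, 0) := by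
  simp [toJet]

theorem image_diag_toJet :
    toJet '' {p | ∃ θ : ℝ, p = (θ, θ, 0)} = {q | ∃ x : ℝ, q = (0, x, 0)} := by
  ext q
  constructor
  · rintro ⟨_, ⟨θ, rfl⟩, rfl⟩
    exact ⟨θ, toJet_diag θ⟩
  · rintro ⟨x, rfl⟩
    exact ⟨(x, x, 0), ⟨x, rfl⟩, toJet_diag x⟩

theorem fderiv_toJet_apply (p u : ℝ × ℝ × ℝ) :
    fderiv ℝ toJet p u = (u.1 - u.2.1, u.2.1, exp p.2.2 * u.2.2) := by
  have hsub : HasFDerivAt (fun q : ℝ × ℝ × ℝ => q.1 - q.2.1)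
      (ContinuousLinearMap.fst ℝ ℝ (ℝ × ℝ) -
        (ContinuousLinearMap.fst ℝ ℝ ℝ).comp (ContinuousLinearMap.snd ℝ ℝ (ℝ × ℝ))) p :=
    hasFDerivAt_fst.sub (hasFDerivAt_fst.comp p hasFDerivAt_snd)
  have hmid : HasFDerivAt (fun q : ℝ × ℝ × ℝ => q.2.1)
      ((ContinuousLinearMap.fst ℝ ℝ ℝ).comp (ContinuousLinearMap.snd ℝ ℝ (ℝ × ℝ))) p :=
    hasFDerivAt_fst.comp p hasFDerivAt_snd
  have hexp : HasFDerivAt (fun q : ℝ × ℝ × ℝ => exp q.2.2 - 1)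
      (exp p.2.2 • (ContinuousLinearMap.snd ℝ ℝ ℝ).comp (ContinuousLinearMap.snd ℝ ℝ (ℝ × ℝ))) p :=
    (hasFDerivAt_snd.comp p hasFDerivAt_snd).exp.sub_const 1
  rw [show toJet = fun q : ℝ × ℝ × ℝ => (q.1 - q.2.1, q.2.1, exp q.2.2 - 1) from rfl,
    (hsub.prodMk (hmid.prodMk hexp)).fderiv]
  simp

theorem betaForm_toJet_fderiv (p u : ℝ × ℝ × ℝ) :
    betaForm (toJet p) (fderiv ℝ toJet p u) = gammaForm p u := by
  rw [fderiv_toJet_apply]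
  simp only [betaForm, gammaForm, toJet]
  ring

end ContactProductCircle

end

open ContactProductCircle in
/-- The contactomorphism used to prove that `(S¹, ξ_std)` is strongly orderable:
`F(θ₁, θ₂, s) = (θ₁ − θ₂, θ₂, e^s − 1)` satisfies (i) `F^*β = γ`, (ii) `F` is injective with
image `ℝ × ℝ × (−1, ∞)`, and (iii) `F` maps the diagonal `{(θ, θ, 0)}` onto the zero section
`{(0, x, 0)}`. -/
theorem contactomorphism_from_contact_product_of_circle_to_jet_space :
    (∀ (p u : ℝ × ℝ × ℝ),
      betaForm (p.1 - p.2.1, p.2.1, Real.exp p.2.2 - 1)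
        (fderiv ℝ (fun q : ℝ × ℝ × ℝ => ((q.1 - q.2.1, q.2.1, Real.exp q.2.2 - 1) : ℝ × ℝ × ℝ))
          p u) = gammaForm p u) ∧
    Function.Injective
      (fun p : ℝ × ℝ × ℝ => ((p.1 - p.2.1, p.2.1, Real.exp p.2.2 - 1) : ℝ × ℝ × ℝ)) ∧
    Set.range (fun p : ℝ × ℝ × ℝ => ((p.1 - p.2.1, p.2.1, Real.exp p.2.2 - 1) : ℝ × ℝ × ℝ)) =
      {q : ℝ × ℝ × ℝ | -1 < q.2.2} ∧
    (∀ θ : ℝ, ((θ - θ, θ, Real.exp (0 : ℝ) - 1) : ℝ × ℝ × ℝ) = (0, θ, 0)) ∧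
    (fun p : ℝ × ℝ × ℝ => ((p.1 - p.2.1, p.2.1, Real.exp p.2.2 - 1) : ℝ × ℝ × ℝ)) ''
        {p : ℝ × ℝ × ℝ | ∃ θ : ℝ, p = (θ, θ, 0)} =
      {q : ℝ × ℝ × ℝ | ∃ x : ℝ, q = (0, x, 0)} :=
  ⟨betaForm_toJet_fderiv, toJet_injective, range_toJet, toJet_diag, image_diag_toJet⟩
end
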